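/- Fix σ, σ' > 0, ε > 0 and t ∈ (0,1), and let ρ_new be the one-point discrete-IMF correlation update. Let ρ* = (√(σ²σ'² + ε²/4) - ε/2)/(σσ'). Then ρ* ∈ (0,1) and ρ* is a fixed point of the update: ρ_new(ρ*) = ρ*. -/
import Mathlib


/-- One-point discrete-IMF correlation update
`ρ_new(ρ) = ((1-t)σ + tρσ')(tσ' + (1-t)ρσ) / ((1-t)²σ² + 2t(1-t)ρσσ' + t²σ'² + t(1-t)ε)`. -/
noncomputable def rhoNew (σ σ' ε t ρ : ℝ) : ℝ :=
  (((1 - t) * σ + t * ρ * σ') * (t * σ' + (1 - t) * ρ * σ)) /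
    ((1 - t) ^ 2 * σ ^ 2 + 2 * t * (1 - t) * ρ * σ * σ' + t ^ 2 * σ' ^ 2 + t * (1 - t) * ε)

/-- For `σ, σ' > 0`, `ε > 0`, `t ∈ (0,1)`, the EOT correlation
`ρ* = (√(σ²σ'² + ε²/4) - ε/2)/(σσ')` lies in `(0,1)` and is a fixed point of the one-point
discrete-IMF correlation update. -/
theorem rhoStar_fixed_point (σ σ' ε t ρstar : ℝ)
    (hσ : 0 < σ) (hσ' : 0 < σ') (hε : 0 < ε) (ht : t ∈ Set.Ioo (0 : ℝ) 1)
    (hρstar : ρstar = (Real.sqrt (σ ^ 2 * σ' ^ 2 + ε ^ 2 / 4) - ε / 2) / (σ * σ')) :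
    ρstar ∈ Set.Ioo (0 : ℝ) 1 ∧ rhoNew σ σ' ε t ρstar = ρstar := by
  obtain ⟨ht0, ht1⟩ := ht
  set s := Real.sqrt (σ ^ 2 * σ' ^ 2 + ε ^ 2 / 4) with hsdef
  have hin : (0:ℝ) ≤ σ ^ 2 * σ' ^ 2 + ε ^ 2 / 4 := by positivity
  have hs2 : s ^ 2 = σ ^ 2 * σ' ^ 2 + ε ^ 2 / 4 := Real.sq_sqrt hin
  have hs0 : 0 ≤ s := Real.sqrt_nonneg _
  have hσσ' : 0 < σ * σ' := mul_pos hσ hσ'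
  -- s > ε/2
  have hsgt : ε / 2 < s := by nlinarith [sq_nonneg (s - ε/2), sq_nonneg (s + ε/2)]
  -- s < σσ' + ε/2
  have hslt : s < σ * σ' + ε / 2 := by nlinarith [sq_nonneg (s + σ * σ' + ε/2)]
  have hρ0 : 0 < ρstar := by
    rw [hρstar]; exact div_pos (by linarith) hσσ'
  have hρ1 : ρstar < 1 := by
    rw [hρstar, div_lt_one hσσ']; linarith
  refine ⟨⟨hρ0, hρ1⟩, ?_⟩
  -- key quadratic identity: (ρ*σσ')² + ε(ρ*σσ') = σ²σ'²
  have hkey : (ρstar * (σ * σ')) ^ 2 + ε * (ρstar * (σ * σ')) = σ ^ 2 * σ' ^ 2 := by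
    have : ρstar * (σ * σ') = s - ε / 2 := by
      rw [hρstar, div_mul_cancel₀ _ (ne_of_gt hσσ')]
    rw [this]; nlinarith
  have hD : (0:ℝ) < (1 - t) ^ 2 * σ ^ 2 + 2 * t * (1 - t) * ρstar * σ * σ' + t ^ 2 * σ' ^ 2
      + t * (1 - t) * ε := by
    have h1 : 0 < t * (1 - t) * ε := mul_pos (mul_pos ht0 (by linarith)) hε
    have h2 : 0 ≤ 2 * t * (1 - t) * ρstar * σ * σ' := by
      have : (0:ℝ) ≤ 2 * t * (1 - t) * ρstar := by nlinarith
      nlinarith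
    nlinarith [sq_nonneg ((1-t)*σ), sq_nonneg (t*σ')]
  have hkey2 : ρstar ^ 2 * (σ * σ') + ε * ρstar = σ * σ' := by
    have h2 : (σ * σ') * (ρstar ^ 2 * (σ * σ') + ε * ρstar) = (σ * σ') * (σ * σ') := by
      linear_combination hkey
    exact mul_left_cancel₀ (ne_of_gt hσσ') h2
  unfold rhoNew
  rw [div_eq_iff (ne_of_gt hD)]
  linear_combination (-(t * (1 - t))) * hkey2
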